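/- arXiv:1110.4828 — 2 statements merged into one kernel-verified Lean document; each statement's English description precedes it below -/
import Mathlib

section
/- Let h₁ be a bounded self-adjoint operator on 𝓗₁ and let φ ∈ 𝓗₁ satisfy h₁ φ = ε φ and N₁ φ = ν φ for scalars ε, ν, where N₁ = x x†. If x† φ ≠ 0, then the vector φ⁽²⁾ := x† φ satisfies h₂ φ⁽²⁾ = (ε ν) φ⁽²⁾ and N₂ φ⁽²⁾ = ν φ⁽²⁾, where h₂ := x† h₁ x and N₂ := x† x. -/
open ContinuousLinearMap

/-- if `h₁ φ = ε φ`, `N₁ φ = ν φ` (with `N₁ = x x†`) and `x† φ ≠ 0`, then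
`φ⁽²⁾ := x† φ` satisfies `h₂ φ⁽²⁾ = (ε ν) φ⁽²⁾` and `N₂ φ⁽²⁾ = ν φ⁽²⁾`, where
`h₂ := x† h₁ x` and `N₂ := x† x`. -/
theorem statement_4
    {H₁ H₂ : Type*} [NormedAddCommGroup H₁] [InnerProductSpace ℂ H₁] [CompleteSpace H₁]
    [NormedAddCommGroup H₂] [InnerProductSpace ℂ H₂] [CompleteSpace H₂]
    (x : H₂ →L[ℂ] H₁) (h₁ : H₁ →L[ℂ] H₁) (hsa : IsSelfAdjoint h₁)
    (φ : H₁) (ε ν : ℂ)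
    (hεφ : h₁ φ = ε • φ) (hνφ : (x ∘L adjoint x) φ = ν • φ)
    (hne : adjoint x φ ≠ 0) :
    (adjoint x ∘L h₁ ∘L x) (adjoint x φ) = (ε * ν) • adjoint x φ ∧
      (adjoint x ∘L x) (adjoint x φ) = ν • adjoint x φ := by
  simp only [comp_apply] at *
  constructor
  · rw [hνφ, map_smul, hεφ, map_smul, map_smul, smul_smul, mul_comm]
  · rw [hνφ, map_smul]
end

section
/- Let H₁ and X be bounded operators on 𝓗 with H₁ crypto-hermitian with respect to Θ (H₁ = Θ⁻¹ H₁† Θ), set X‡ := Θ⁻¹ X† Θ, N₁ := X X‡, N₂ := X‡ X, H₂ := X‡ H₁ X, and assume H₁ N₁ = N₁ H₁. Then: (i) H₂ is crypto-hermitian with respect to Θ, i.e. H₂ = Θ⁻¹ H₂† Θ; (ii) H₂ N₂ = N₂ H₂; (iii) the intertwining relations N₁ X = X N₂ and H₁ N₁ X = X H₂ hold. -/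
open ContinuousLinearMap

/-- with `H₁` crypto-hermitian w.r.t. `Θ`, `X‡ := Θ⁻¹ X† Θ`,
`N₁ := X X‡`, `N₂ := X‡ X`, `H₂ := X‡ H₁ X` and `H₁ N₁ = N₁ H₁`, one has:
(i) `H₂` is crypto-hermitian w.r.t. `Θ`; (ii) `H₂ N₂ = N₂ H₂`;
(iii) `N₁ X = X N₂` and `H₁ N₁ X = X H₂`. -/
theorem statement_16
    {𝓗 : Type*} [NormedAddCommGroup 𝓗] [InnerProductSpace ℂ 𝓗] [CompleteSpace 𝓗]
    (Θ Θinv : 𝓗 →L[ℂ] 𝓗) (hΘpos : Θ.IsPositive)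
    (hΘ1 : Θ ∘L Θinv = 1) (hΘ2 : Θinv ∘L Θ = 1)
    (H₁ X : 𝓗 →L[ℂ] 𝓗)
    (hCH₁ : H₁ = Θinv ∘L adjoint H₁ ∘L Θ)
    (Xd N₁ N₂ H₂ : 𝓗 →L[ℂ] 𝓗)
    (hXd : Xd = Θinv ∘L adjoint X ∘L Θ)
    (hN₁ : N₁ = X ∘L Xd) (hN₂ : N₂ = Xd ∘L X) (hH₂ : H₂ = Xd ∘L H₁ ∘L X)
    (hcomm : H₁ ∘L N₁ = N₁ ∘L H₁) :
    H₂ = Θinv ∘L adjoint H₂ ∘L Θ ∧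
      H₂ ∘L N₂ = N₂ ∘L H₂ ∧
      N₁ ∘L X = X ∘L N₂ ∧
      (H₁ ∘L N₁) ∘L X = X ∘L H₂ := by
  -- move everything to the multiplicative/star language (definitional)
  have hΘ1' : Θ * Θinv = 1 := hΘ1
  have hΘ2' : Θinv * Θ = 1 := hΘ2
  have hCH₁' : H₁ = Θinv * (star H₁ * Θ) := hCH₁
  have hXd' : Xd = Θinv * (star X * Θ) := hXd
  have hN₁' : N₁ = X * Xd := hN₁
  have hN₂' : N₂ = Xd * X := hN₂
  have hH₂' : H₂ = Xd * (H₁ * X) := hH₂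
  have hcomm' : H₁ * N₁ = N₁ * H₁ := hcomm
  have hΘsa : star Θ = Θ := hΘpos.isSelfAdjoint
  have hΘinvsa : star Θinv = Θinv := by
    have h1 : star Θinv * Θ = 1 := by
      have := congrArg star hΘ1'
      simpa [star_mul, hΘsa] using this
    calc star Θinv = star Θinv * (Θ * Θinv) := by rw [hΘ1', mul_one]
      _ = (star Θinv * Θ) * Θinv := by rw [mul_assoc]
      _ = Θinv := by rw [h1, one_mul]
  have hXdadj : star Xd = Θ * (X * Θinv) := by
    rw [hXd']
    simp [star_mul, hΘsa, hΘinvsa, mul_assoc]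
  have e1 : Xd * (H₁ * X) = Θinv * (star X * (star H₁ * (Θ * X))) := by
    rw [hXd']
    conv_lhs => rw [hCH₁']
    simp only [mul_assoc]
    rw [← mul_assoc Θ Θinv, hΘ1', one_mul]
  have e2 : Θinv * (star (Xd * (H₁ * X)) * Θ)
      = Θinv * (star X * (star H₁ * (Θ * X))) := by
    simp only [star_mul, hXdadj, mul_assoc, hΘ2', mul_one]
  have hi : H₂ = Θinv * (star H₂ * Θ) := by
    rw [hH₂']; exact e1.trans e2.symm
  have hiii : N₁ * X = X * N₂ := by
    rw [hN₁', hN₂', mul_assoc]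
  have hiv : (H₁ * N₁) * X = X * H₂ := by
    rw [hcomm', hN₁', hH₂']
    simp only [mul_assoc]
  have hii : H₂ * N₂ = N₂ * H₂ := by
    have key : H₁ * (X * Xd) = (X * Xd) * H₁ := by rw [← hN₁']; exact hcomm'
    rw [hH₂', hN₂']
    calc (Xd * (H₁ * X)) * (Xd * X)
        = Xd * ((H₁ * (X * Xd)) * X) := by simp only [mul_assoc]
      _ = Xd * (((X * Xd) * H₁) * X) := by rw [key]
      _ = (Xd * X) * (Xd * (H₁ * X)) := by simp only [mul_assoc]
  exact ⟨hi, hii, hiii, hiv⟩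
end
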